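/- Let k ≥ 6 and let w be a ((k−2)/(k−3))⁺-A-free word over the alphabet Fin k. Then every factor of w of length k−3 has pairwise distinct letters (is a (k−3)-permutation). -/

import Mathlib

/-- `x` is a factor (contiguous subword) of `w`. -/
def IsFactor {A : Type*} (x w : List A) : Prop := ∃ p s, w = p ++ x ++ s

/-- `w` is a strong Abelian `β`-power: `w = u₁ ++ u₂ ++ ⋯ ++ u_k ++ u'` where
`k = ⌊β⌋`, `u₁ ≠ []`, all `uᵢ` are Abelian equivalent (permutations of each other),
`u'` is Abelian equivalent to the prefix of `u₁` of length `|u'| < |u₁|`,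
and `|w| = β·|u₁|`. -/
def IsStrongAPower {A : Type*} (β : ℚ) (w : List A) : Prop :=
  ∃ (u₁ : List A) (us : List (List A)) (u' : List A),
    u₁ ≠ [] ∧
    ((us.length : ℤ) + 1 = ⌊β⌋) ∧
    (∀ u ∈ us, u.Perm u₁) ∧
    u'.length < u₁.length ∧
    u'.Perm (u₁.take u'.length) ∧
    w = (u₁ :: us).flatten ++ u' ∧
    ((w.length : ℚ) = β * u₁.length)

/-- `w` is `β`-A-free: no factor of `w` is a strong Abelian `γ`-power for a rational `γ ≥ β`. -/
def AFree {A : Type*} (β : ℚ) (w : List A) : Prop :=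
  ∀ x, IsFactor x w → ∀ γ : ℚ, β ≤ γ → ¬ IsStrongAPower γ x

/-- `w` is `β⁺`-A-free: no factor of `w` is a strong Abelian `γ`-power for a rational `γ > β`. -/
def APlusFree {A : Type*} (β : ℚ) (w : List A) : Prop :=
  ∀ x, IsFactor x w → ∀ γ : ℚ, β < γ → ¬ IsStrongAPower γ x

/-!
A repeated letter in a short factor `x` yields a factor `a q a` of `w`, and `a q a` is a strong
Abelian `(|q| + 2)/(|q| + 1)`-power (the period `a q` followed by the tail `a`). Since `x` has
length `k - 3`, we have `|q| + 1 < k - 3`, so this exponent exceeds `1 + 1/(k - 3)`.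
-/

theorem isFactor_iff_isInfix {A : Type*} {x w : List A} : IsFactor x w ↔ x <:+: w := by
  simp only [IsFactor, List.IsInfix, eq_comm]

theorem List.exists_cons_append_singleton_infix_of_not_nodup {A : Type*} {l : List A}
    (h : ¬ l.Nodup) : ∃ a q, a :: q ++ [a] <:+: l := by
  obtain ⟨a, haa⟩ : ∃ a, [a, a].Sublist l := by simpa [List.nodup_iff_sublist] using h
  obtain ⟨r₁, r₂, rfl, ha₁, ha₂⟩ := List.cons_sublist_iff.mp haa
  obtain ⟨s, t, rfl⟩ := List.append_of_mem ha₁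
  obtain ⟨u, v, rfl⟩ := List.append_of_mem (List.singleton_sublist.mp ha₂)
  exact ⟨a, t ++ u, s, v, by simp⟩

theorem isStrongAPower_cons_append_singleton {A : Type*} (a : A) (q : List A) :
    IsStrongAPower (((q.length : ℚ) + 2) / (q.length + 1)) (a :: q ++ [a]) := by
  rcases q with _ | ⟨b, q⟩
  -- for `q = []` the exponent is `2`, so `a a` has two periods `[a]` and an empty tail
  · exact ⟨[a], [[a]], [], by simp, by norm_num, by simp, by simp, by simp, by simp, by norm_num⟩
  · have hfloor : ⌊((q.length + 1 : ℕ) + 2 : ℚ) / ((q.length + 1 : ℕ) + 1)⌋ = 1 := by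
      rw [Int.floor_eq_iff]
      constructor
      · rw [Int.cast_one, one_le_div (by positivity)]
        linarith
      · rw [div_lt_iff₀ (by positivity)]
        push_cast
        linarith
    refine ⟨a :: b :: q, [], [a], by simp, by simpa using hfloor.symm, by simp, by simp, by simp,
      by simp, ?_⟩
    simp only [List.length_append, List.length_cons, List.length_nil]
    field_simp
    push_cast
    ring

theorem add_one_div_lt_add_two_div_add_one {m n : ℕ} (h : n + 1 < m) :
    ((m : ℚ) + 1) / m < ((n : ℚ) + 2) / (n + 1) := by
  have h' : (n : ℚ) + 1 < m := by exact_mod_cast h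
  rw [div_lt_div_iff₀ (by linarith) (by positivity)]
  nlinarith

theorem APlusFree.nodup_of_isFactor {A : Type*} {m : ℕ} {w x : List A}
    (hw : APlusFree (((m : ℚ) + 1) / m) w) (hx : IsFactor x w) (hlen : x.length ≤ m) :
    x.Nodup := by
  by_contra hnd
  obtain ⟨a, q, haq⟩ := List.exists_cons_append_singleton_infix_of_not_nodup hnd
  have hq : q.length + 1 < m := by
    have := haq.length_le
    simp only [List.length_append, List.length_cons] at this
    omega
  exact hw _ (isFactor_iff_isInfix.mpr (haq.trans (isFactor_iff_isInfix.mp hx))) _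
    (add_one_div_lt_add_two_div_add_one hq) (isStrongAPower_cons_append_singleton a q)

theorem statement_3_general (k : ℕ) (w : List (Fin k))
    (hw : APlusFree (((k : ℚ) - 2) / ((k : ℚ) - 3)) w)
    (x : List (Fin k)) (hx : IsFactor x w) (hlen : x.length = k - 3) :
    x.Nodup := by
  obtain hk | ⟨m, rfl⟩ : k < 3 ∨ ∃ m, k = m + 3 :=
    (lt_or_ge k 3).imp_right fun hk => ⟨k - 3, by omega⟩
  · rw [List.length_eq_zero_iff.mp (by omega : x.length = 0)]
    exact List.nodup_nil
  · have hβ : (((m + 3 : ℕ) : ℚ) - 2) / ((m + 3 : ℕ) - 3) = ((m : ℚ) + 1) / m := by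
      push_cast
      ring
    rw [hβ] at hw
    exact hw.nodup_of_isFactor hx (by omega)

theorem statement_3 (k : ℕ) (hk : 6 ≤ k) (w : List (Fin k))
    (hw : APlusFree (((k : ℚ) - 2) / ((k : ℚ) - 3)) w)
    (x : List (Fin k)) (hx : IsFactor x w) (hlen : x.length = k - 3) :
    x.Nodup :=
  statement_3_general k w hw x hx hlen
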